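/- Let T > 0 and d1 < x_T < d2, and for x ∈ ℝ, 0 ≤ s < t < T and d ∈ ℝ set G(x,s;d,t) = (1/2)·((d−x)²/(t−s) + (d−x_T)²/(T−t) − (x−x_T)²/(T−s)). Then for every x ∈ (d1,d2) and s ∈ [0,T): (i) for each d ∈ {d1,d2}, the unique minimizer of t ↦ G(x,s;d,t) over (s,T) is ν* = s + (T−s)·(x−d)/(x+x_T−2d); (ii) the minimum of G(x,s;d,t) over (d,t) ∈ {d1,d2}×(s,T) equals 2(x−d1)(x_T−d1)/(T−s) if x ≤ d1+d2−x_T, and equals 2(d2−x)(d2−x_T)/(T−s) if x ≥ d1+d2−x_T. -/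

import Mathlib

/-- The Brownian-bridge two-point exit cost `G(x,s;d,t)`. -/
noncomputable def Gcost (T xT x s d t : ℝ) : ℝ :=
  (1 / 2) * ((d - x) ^ 2 / (t - s) + (d - xT) ^ 2 / (T - t) - (x - xT) ^ 2 / (T - s))

lemma gcost_eq (T xT x s d t : ℝ) (hs : s < t) (ht : t < T) :
    Gcost T xT x s d t = 2 * (x - d) * (xT - d) / (T - s) +
      ((x - d) * (T - t) - (xT - d) * (t - s)) ^ 2 / (2 * (t - s) * (T - t) * (T - s)) := by
  have h1 : t - s ≠ 0 := by linarith
  have h2 : T - t ≠ 0 := by linarith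
  have h3 : T - s ≠ 0 := by linarith
  unfold Gcost
  field_simp
  ring

lemma min_at (T xT x s d : ℝ) (hsT : s < T) (hab : 0 < (x - d) * (xT - d)) :
    (s + (T - s) * (x - d) / (x + xT - 2 * d) ∈ Set.Ioo s T) ∧
    Gcost T xT x s d (s + (T - s) * (x - d) / (x + xT - 2 * d)) =
      2 * (x - d) * (xT - d) / (T - s) ∧
    ∀ t ∈ Set.Ioo s T, 2 * (x - d) * (xT - d) / (T - s) ≤ Gcost T xT x s d t ∧
      (t ≠ s + (T - s) * (x - d) / (x + xT - 2 * d) →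
        2 * (x - d) * (xT - d) / (T - s) < Gcost T xT x s d t) := by
  have hc2 : 0 < (x + xT - 2 * d) ^ 2 := by nlinarith [sq_nonneg (x - xT)]
  have hc : x + xT - 2 * d ≠ 0 := by
    intro h; rw [h] at hc2; simp at hc2
  have hac : 0 < (x - d) * (x + xT - 2 * d) := by nlinarith [sq_nonneg (x - d)]
  have hbc : 0 < (xT - d) * (x + xT - 2 * d) := by nlinarith [sq_nonneg (xT - d)]
  have h1 : 0 < (x - d) / (x + xT - 2 * d) := by
    have : (x - d) / (x + xT - 2 * d) =
        ((x - d) * (x + xT - 2 * d)) / (x + xT - 2 * d) ^ 2 := by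
      rw [sq, mul_div_mul_right _ _ hc]
    rw [this]; exact div_pos hac hc2
  have h1b : 0 < (xT - d) / (x + xT - 2 * d) := by
    have : (xT - d) / (x + xT - 2 * d) =
        ((xT - d) * (x + xT - 2 * d)) / (x + xT - 2 * d) ^ 2 := by
      rw [sq, mul_div_mul_right _ _ hc]
    rw [this]; exact div_pos hbc hc2
  have hsum : (x - d) / (x + xT - 2 * d) + (xT - d) / (x + xT - 2 * d) = 1 := by
    rw [← add_div, div_eq_one_iff_eq hc]
    ring
  have h2 : (x - d) / (x + xT - 2 * d) < 1 := by linarith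
  have heq : (T - s) * (x - d) / (x + xT - 2 * d) =
      (T - s) * ((x - d) / (x + xT - 2 * d)) := mul_div_assoc _ _ _
  have hν1 : s < s + (T - s) * (x - d) / (x + xT - 2 * d) := by
    have := mul_pos (show (0:ℝ) < T - s by linarith) h1
    rw [heq]; linarith
  have hν2 : s + (T - s) * (x - d) / (x + xT - 2 * d) < T := by
    have := mul_lt_mul_of_pos_left h2 (show (0:ℝ) < T - s by linarith)
    rw [heq]; linarith
  have hzero : (x - d) * (T - (s + (T - s) * (x - d) / (x + xT - 2 * d))) -
      (xT - d) * ((s + (T - s) * (x - d) / (x + xT - 2 * d)) - s) = 0 := by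
    have e : (T - s) * (x - d) / (x + xT - 2 * d) * (x + xT - 2 * d) = (T - s) * (x - d) :=
      div_mul_cancel₀ _ hc
    linear_combination (-1 : ℝ) * e
  have hval : Gcost T xT x s d (s + (T - s) * (x - d) / (x + xT - 2 * d)) =
      2 * (x - d) * (xT - d) / (T - s) := by
    rw [gcost_eq T xT x s d _ hν1 hν2, hzero]
    simp
  refine ⟨⟨hν1, hν2⟩, hval, ?_⟩
  rintro t ⟨hts, htT⟩
  have hrw := gcost_eq T xT x s d t hts htT
  have hden : 0 < 2 * (t - s) * (T - t) * (T - s) := by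
    have := mul_pos (mul_pos (mul_pos (show (0:ℝ) < 2 by norm_num)
      (show (0:ℝ) < t - s by linarith)) (show (0:ℝ) < T - t by linarith))
      (show (0:ℝ) < T - s by linarith)
    linarith
  constructor
  · have hsq : 0 ≤ ((x - d) * (T - t) - (xT - d) * (t - s)) ^ 2 := sq_nonneg _
    have := div_nonneg hsq (le_of_lt hden)
    linarith [this, hrw.ge, hrw.le]
  · intro htne
    have hne : (x - d) * (T - t) - (xT - d) * (t - s) ≠ 0 := by
      intro h
      apply htne
      have ht' : t * (x + xT - 2 * d) = (x - d) * T + (xT - d) * s := by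
        linear_combination -h
      have h3 : t = ((x - d) * T + (xT - d) * s) / (x + xT - 2 * d) :=
        (eq_div_iff hc).mpr ht'
      have h4 : s + (T - s) * (x - d) / (x + xT - 2 * d) =
          ((x - d) * T + (xT - d) * s) / (x + xT - 2 * d) := by
        rw [eq_div_iff hc, add_mul, div_mul_cancel₀ _ hc]; ring
      rw [h3, h4]
    have hsq : 0 < ((x - d) * (T - t) - (xT - d) * (t - s)) ^ 2 :=
      pow_two_pos_of_ne_zero hne
    have := div_pos hsq hden
    linarith [this, hrw.le]

theorem stmt_19 (T xT d1 d2 : ℝ) (hT : 0 < T) (h1 : d1 < xT) (h2 : xT < d2) :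
    ∀ x ∈ Set.Ioo d1 d2, ∀ s, 0 ≤ s → s < T →
      (∀ d, (d = d1 ∨ d = d2) →
        s + (T - s) * (x - d) / (x + xT - 2 * d) ∈ Set.Ioo s T ∧
        ∀ t ∈ Set.Ioo s T, t ≠ s + (T - s) * (x - d) / (x + xT - 2 * d) →
          Gcost T xT x s d (s + (T - s) * (x - d) / (x + xT - 2 * d)) <
            Gcost T xT x s d t) ∧
      (x ≤ d1 + d2 - xT →
        IsLeast {r : ℝ | ∃ dd, (dd = d1 ∨ dd = d2) ∧ ∃ t ∈ Set.Ioo s T,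
            r = Gcost T xT x s dd t}
          (2 * (x - d1) * (xT - d1) / (T - s))) ∧
      (d1 + d2 - xT ≤ x →
        IsLeast {r : ℝ | ∃ dd, (dd = d1 ∨ dd = d2) ∧ ∃ t ∈ Set.Ioo s T,
            r = Gcost T xT x s dd t}
          (2 * (d2 - x) * (d2 - xT) / (T - s))) := by
  rintro x ⟨hx1, hx2⟩ s hs0 hsT
  have hab1 : 0 < (x - d1) * (xT - d1) :=
    mul_pos (by linarith) (by linarith)
  have hab2 : 0 < (x - d2) * (xT - d2) :=
    mul_pos_of_neg_of_neg (by linarith) (by linarith)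
  obtain ⟨hmem1, hval1, hmin1⟩ := min_at T xT x s d1 hsT hab1
  obtain ⟨hmem2, hval2, hmin2⟩ := min_at T xT x s d2 hsT hab2
  refine ⟨?_, ?_, ?_⟩
  · rintro d (rfl | rfl)
    · exact ⟨hmem1, fun t ht htne => by
        rw [hval1]; exact (hmin1 t ht).2 htne⟩
    · exact ⟨hmem2, fun t ht htne => by
        rw [hval2]; exact (hmin2 t ht).2 htne⟩
  · intro hx
    constructor
    · exact ⟨d1, Or.inl rfl, s + (T - s) * (x - d1) / (x + xT - 2 * d1), hmem1, hval1.symm⟩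
    · rintro r ⟨dd, hdd, t, ht, rfl⟩
      rcases hdd with h | h
      · rw [h]; exact (hmin1 t ht).1
      · rw [h]
        have hle : 2 * (x - d1) * (xT - d1) / (T - s) ≤
              2 * (x - d2) * (xT - d2) / (T - s) := by
            rw [div_le_div_iff₀ (by linarith) (by linarith)]
            nlinarith [mul_nonneg (mul_nonneg (show (0:ℝ) ≤ T - s by linarith)
              (show (0:ℝ) ≤ d2 - d1 by linarith))
              (show (0:ℝ) ≤ d1 + d2 - xT - x by linarith)]
        exact le_trans hle (hmin2 t ht).1
  · intro hx
    have hbright : (2 : ℝ) * (d2 - x) * (d2 - xT) / (T - s) =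
        2 * (x - d2) * (xT - d2) / (T - s) := by ring
    constructor
    · exact ⟨d2, Or.inr rfl, s + (T - s) * (x - d2) / (x + xT - 2 * d2), hmem2,
        by rw [hbright]; exact hval2.symm⟩
    · rintro r ⟨dd, hdd, t, ht, rfl⟩
      rcases hdd with h | h
      · rw [h]
        have hle : 2 * (d2 - x) * (d2 - xT) / (T - s) ≤
              2 * (x - d1) * (xT - d1) / (T - s) := by
            rw [div_le_div_iff₀ (by linarith) (by linarith)]
            nlinarith [mul_nonneg (mul_nonneg (show (0:ℝ) ≤ T - s by linarith)
              (show (0:ℝ) ≤ d2 - d1 by linarith))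
              (show (0:ℝ) ≤ x - (d1 + d2 - xT) by linarith)]
        exact le_trans hle (hmin1 t ht).1
      · rw [h, hbright]; exact (hmin2 t ht).1
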